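/- arXiv:1902.07928 — 5 statements merged into one kernel-verified Lean document; each statement's English description precedes it below -/
import Mathlib

section
/- For any nondecreasing sequence of memory locations e_1 ≤ e_2 ≤ ... ≤ e_n and any block size B ≥ 1, the expected smoothed cache-oblivious cost, defined as the average over shifts s ∈ [0,B) of the number of indices i ≥ 2 with ⌊(e_i+s)/B⌋ ≠ ⌊(e_{i-1}+s)/B⌋, equals the sum over i ≥ 2 of min(1, (e_i - e_{i-1})/B). -/
/-!
Fix one gap `e i ≤ e (i + 1) = e i + d`. Summing `⌊(x + s)/B⌋` over all shifts `s < B` gives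
exactly `x` (Hermite's identity), so the block index advances by `d` in total over the `B`
shifts. If `d ≤ B` it advances by at most one for each shift, hence exactly `d` shifts see a
block change; if `d ≥ B` every shift does. So `min B d` of the `B` shifts are charged, and
averaging gives `min 1 (d / B)`.
-/

open Finset

namespace Nat

theorem sum_range_add_div {B : ℕ} (hB : 0 < B) (x : ℕ) : ∑ s ∈ range B, (x + s) / B = x := by
  induction x with
  | zero => exact sum_eq_zero fun s hs => Nat.div_eq_of_lt (by simpa using hs)
  | succ x ih =>
    have shift := sum_range_succ' (fun s => (x + s) / B) B
    rw [sum_range_succ, ih, Nat.add_div_right x hB] at shift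
    simp only [add_zero, ← add_assoc, add_right_comm x _ 1] at shift
    omega

theorem add_div_le_div_add_one {B a d : ℕ} (hB : 0 < B) (hd : d ≤ B) :
    (a + d) / B ≤ a / B + 1 :=
  Nat.add_div_right a hB ▸ Nat.div_le_div_right (by omega)

theorem div_add_one_le_add_div {B a d : ℕ} (hB : 0 < B) (hd : B ≤ d) :
    a / B + 1 ≤ (a + d) / B :=
  Nat.add_div_right a hB ▸ Nat.div_le_div_right (by omega)

theorem card_filter_range_add_div_ne (B a d : ℕ) :
    #{s ∈ range B | (a + d + s) / B ≠ (a + s) / B} = min B d := by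
  rcases B.eq_zero_or_pos with rfl | hB
  · simp
  rcases le_total B d with hBd | hdB
  · rw [min_eq_left hBd, filter_true_of_mem, card_range]
    intro s _
    have := div_add_one_le_add_div (a := a + s) hB hBd
    rw [add_right_comm] at this
    omega
  · have step (s : ℕ) :
        (if (a + d + s) / B ≠ (a + s) / B then 1 else 0) = (a + d + s) / B - (a + s) / B := by
      have hle : (a + s) / B ≤ (a + s + d) / B := Nat.div_le_div_right (by omega)
      have hsucc := add_div_le_div_add_one (a := a + s) hB hdB
      rw [add_right_comm] at hle hsucc
      split_ifs <;> omega
    rw [min_eq_right hdB, card_filter, sum_congr rfl fun s _ => step s,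
      sum_tsub_distrib _ fun s _ => Nat.div_le_div_right (by omega),
      sum_range_add_div hB, sum_range_add_div hB]
    omega

theorem cast_min_div {K : Type*} [Field K] [LinearOrder K] [IsStrictOrderedRing K] (B d : ℕ) :
    ((min B d : ℕ) : K) / B = min 1 ((d : K) / B) := by
  rcases B.eq_zero_or_pos with rfl | hB
  · simp
  rw [Nat.cast_min, ← min_div_div_right B.cast_nonneg, div_self (by positivity)]

end Nat

theorem smoothed_CO_eq_LoR_general (n B : ℕ) (e : ℕ → ℕ) (he : Monotone e) :
    (1 / (B : ℝ)) *
      ∑ s ∈ Finset.range B, ∑ i ∈ Finset.range (n - 1),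
        (if (e (i + 1) + s) / B ≠ (e i + s) / B then (1 : ℝ) else 0)
    = ∑ i ∈ Finset.range (n - 1), min 1 (((e (i + 1) - e i : ℕ) : ℝ) / B) := by
  rw [sum_comm, mul_sum]
  refine sum_congr rfl fun i _ => ?_
  obtain ⟨d, hd⟩ := Nat.exists_eq_add_of_le (he i.le_succ)
  rw [hd, Nat.add_sub_cancel_left, sum_boole, Nat.card_filter_range_add_div_ne,
    one_div_mul_eq_div, Nat.cast_min_div]

/-- For any nondecreasing sequence of memory locations and block size `B ≥ 1`,
the smoothed cache-oblivious cost (average over shifts `s ∈ [0,B)` of the number of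
indices where the block changes) equals `∑ min(1, gap/B)`. -/
theorem smoothed_CO_eq_LoR (n B : ℕ) (hB : 1 ≤ B) (e : ℕ → ℕ) (he : Monotone e) :
    (1 / (B : ℝ)) *
      ∑ s ∈ Finset.range B, ∑ i ∈ Finset.range (n - 1),
        (if (e (i + 1) + s) / B ≠ (e i + s) / B then (1 : ℝ) else 0)
    = ∑ i ∈ Finset.range (n - 1), min 1 (((e (i + 1) - e i : ℕ) : ℝ) / B) :=
  smoothed_CO_eq_LoR_general n B e he
end

section
/- Let ℓ : ℕ → ℝ be a nonnegative nondecreasing concave function with ℓ(0) = 0 (so that the second differences γ_i = 2ℓ(i) − ℓ(i+1) − ℓ(i−1) are nonnegative for 1 ≤ i ≤ N−1, where we set ℓ(N+1) = ℓ(N)). Define α_i = i·γ_i and β_i = i for i = 1,...,N, and define ℓ_B(d) = min(1, d/B). Then for every integer x with 1 ≤ x < N, Σ_{i=1}^{N} α_i · ℓ_{β_i}(x) = ℓ(x). -/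
open Finset

private lemma tele_aux (E : ℕ → ℝ) (a : ℕ) :
    ∀ b, a ≤ b → ∑ i ∈ Finset.Ioc a b, (E (i - 1) - E i) = E a - E b := by
  intro b hb
  induction b, hb using Nat.le_induction with
  | base => simp
  | succ b hb ih =>
      rw [Finset.sum_Ioc_succ_top (by omega), ih]
      have : b + 1 - 1 = b := rfl
      rw [this]; ring

private lemma sumA (ℓ : ℕ → ℝ) (hzero : ℓ 0 = 0) :
    ∀ x : ℕ, ∑ i ∈ Finset.Ioc 0 x, ((i : ℝ) * (2 * ℓ i - ℓ (i + 1) - ℓ (i - 1)))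
      = ℓ x - (x : ℝ) * (ℓ (x + 1) - ℓ x) := by
  intro x
  induction x with
  | zero => simp [hzero]
  | succ x ih =>
      rw [Finset.sum_Ioc_succ_top (Nat.zero_le _), ih]
      have : x + 1 - 1 = x := rfl
      rw [this]
      push_cast
      ring

/-- A nonnegative nondecreasing concave `ℓ : ℕ → ℝ` with `ℓ 0 = 0` can be written,
on `[1, N)`, as the linear combination `∑ i, α_i · ℓ_{β_i}` with `α_i = i·γ_i`,
`β_i = i`, where `γ_i = 2ℓ(i) − ℓ(i+1) − ℓ(i−1)` (with the convention `ℓ(N+1) = ℓ(N)`)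
and `ℓ_B(d) = min(1, d/B)`. -/
theorem lin_comb (N : ℕ) (ℓ : ℕ → ℝ) (hnonneg : ∀ i, 0 ≤ ℓ i) (hmono : Monotone ℓ)
    (hzero : ℓ 0 = 0)
    (hconcave : ∀ i, 1 ≤ i → ℓ (i + 1) + ℓ (i - 1) ≤ 2 * ℓ i) :
    ∀ x : ℕ, 1 ≤ x → x < N →
      ∑ i ∈ Finset.Icc 1 N,
        ((i : ℝ) * (2 * ℓ i - (if i + 1 > N then ℓ N else ℓ (i + 1)) - ℓ (i - 1))) *
          min 1 ((x : ℝ) / (i : ℝ))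
      = ℓ x := by
  intro x hx hxN
  have hxN' : x ≤ N := hxN.le
  rw [show Finset.Icc 1 N = Finset.Ioc 0 N from by rw [← Finset.Icc_add_one_left_eq_Ioc]; rfl]
  rw [← Finset.sum_Ioc_consecutive _ (Nat.zero_le x) hxN']
  -- first sum
  have h1 : ∑ i ∈ Finset.Ioc 0 x,
      ((i : ℝ) * (2 * ℓ i - (if i + 1 > N then ℓ N else ℓ (i + 1)) - ℓ (i - 1))) *
        min 1 ((x : ℝ) / (i : ℝ))
      = ℓ x - (x : ℝ) * (ℓ (x + 1) - ℓ x) := by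
    rw [← sumA ℓ hzero x]
    apply Finset.sum_congr rfl
    intro i hi
    simp only [Finset.mem_Ioc] at hi
    have hi1 : (1 : ℝ) ≤ (x : ℝ) / (i : ℝ) := by
      rw [one_le_div (by exact_mod_cast hi.1)]
      exact_mod_cast hi.2
    rw [min_eq_left hi1, if_neg (by omega), mul_one]
  -- second sum
  set E : ℕ → ℝ := fun j => ℓ (min (j + 1) N) - ℓ j with hE
  have h2 : ∑ i ∈ Finset.Ioc x N,
      ((i : ℝ) * (2 * ℓ i - (if i + 1 > N then ℓ N else ℓ (i + 1)) - ℓ (i - 1))) *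
        min 1 ((x : ℝ) / (i : ℝ))
      = (x : ℝ) * (ℓ (x + 1) - ℓ x) := by
    have key : ∑ i ∈ Finset.Ioc x N,
        ((i : ℝ) * (2 * ℓ i - (if i + 1 > N then ℓ N else ℓ (i + 1)) - ℓ (i - 1))) *
          min 1 ((x : ℝ) / (i : ℝ))
        = ∑ i ∈ Finset.Ioc x N, (x : ℝ) * (E (i - 1) - E i) := by
      apply Finset.sum_congr rfl
      intro i hi
      simp only [Finset.mem_Ioc] at hi
      have hix : x < i := hi.1
      have hiN : i ≤ N := hi.2
      have hipos : 0 < i := lt_of_le_of_lt (Nat.zero_le x) hix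
      have hle1 : (x : ℝ) / (i : ℝ) ≤ 1 := by
        rw [div_le_one (by exact_mod_cast hipos)]
        exact_mod_cast hix.le
      rw [min_eq_right hle1]
      have hEi : E (i - 1) - E i
          = 2 * ℓ i - (if i + 1 > N then ℓ N else ℓ (i + 1)) - ℓ (i - 1) := by
        simp only [hE]
        have h1' : i - 1 + 1 = i := Nat.succ_pred_eq_of_pos hipos
        rw [h1', min_eq_left hiN]
        by_cases hcase : i + 1 > N
        · rw [if_pos hcase, min_eq_right (by omega)]
          ring
        · rw [if_neg hcase, min_eq_left (by omega)]
          ring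
      rw [hEi]
      have hi0 : (i : ℝ) ≠ 0 := by exact_mod_cast hipos.ne'
      field_simp
    rw [key, ← Finset.mul_sum, tele_aux E x N hxN']
    have hEx : E x = ℓ (x + 1) - ℓ x := by
      simp only [hE, min_eq_left (by omega : x + 1 ≤ N)]
    have hEN : E N = 0 := by
      simp only [hE, min_eq_right (by omega : N ≤ N + 1)]
      ring
    rw [hEx, hEN]
    ring
  rw [h1, h2]
  ring
end

section
/- Let ℓ : ℕ → ℝ be nonnegative, nondecreasing, concave with ℓ(0)=0, and let α_i, β_i (1 ≤ i ≤ N) be the coefficients from its representation as a linear combination of the functions ℓ_B (i.e., α_i = i·(2ℓ(i)−ℓ(i+1)−ℓ(i−1)), β_i = i, with ℓ(N+1)=ℓ(N)). Then for every nondecreasing execution sequence E = (e_1,...,e_n) with all consecutive gaps e_i − e_{i−1} in [1, N), the LoR cost satisfies Σ_{i=1}^{N} α_i · JR_{ℓ_{β_i}}(E) = JR_ℓ(E), where JR_f(E) = Σ_{k=2}^{n} f(e_k − e_{k−1}). -/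
/-!
Since `i · min(1, d/i) = min(i, d)` and `α_i / i` is minus the second difference of `ℓ` at `i`,
summation by parts turns `∑ α_i ℓ_i(d)` into `∑_{i ≤ d} (ℓ(i) - ℓ(i-1)) = ℓ(d) - ℓ(0)` for every
gap `d ≤ N`; the boundary term vanishes because `ℓ` is extended constantly past `N`. Summing over
the gaps of the execution sequence gives the identity.
-/

open Finset

theorem sum_Icc_min_mul_secondDiff (L : ℕ → ℝ) (d M : ℕ) :
    ∑ i ∈ Icc 1 M, ((min i d : ℕ) : ℝ) * (2 * L i - L (i + 1) - L (i - 1)) =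
      L (min M d) - L 0 - ((min M d : ℕ) : ℝ) * (L (M + 1) - L M) := by
  induction M with
  | zero => simp
  | succ M ih =>
    rw [sum_Icc_succ_top (by omega), ih, Nat.add_sub_cancel]
    rcases le_or_gt d M with hdM | hMd
    · rw [min_eq_right hdM, min_eq_right (by omega)]
      ring
    · rw [min_eq_left hMd.le, min_eq_left hMd]
      push_cast
      ring

theorem mul_min_one_div {i : ℝ} (hi : 0 < i) (d : ℝ) : i * min 1 (d / i) = min i d := by
  rw [mul_min_of_nonneg _ _ hi.le, mul_one, mul_div_cancel₀ _ hi.ne']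

theorem sum_coeff_mul_min_one_div (N : ℕ) (ℓ : ℕ → ℝ) {d : ℕ} (hdN : d ≤ N) :
    ∑ i ∈ Icc 1 N,
      ((i : ℝ) * (2 * ℓ i - (if i + 1 > N then ℓ N else ℓ (i + 1)) - ℓ (i - 1))) *
        min 1 ((d : ℝ) / (i : ℝ)) = ℓ d - ℓ 0 := by
  set L : ℕ → ℝ := fun j => ℓ (min j N)
  have hterm : ∀ i ∈ Icc 1 N,
      ((i : ℝ) * (2 * ℓ i - (if i + 1 > N then ℓ N else ℓ (i + 1)) - ℓ (i - 1))) *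
        min 1 ((d : ℝ) / (i : ℝ)) =
      ((min i d : ℕ) : ℝ) * (2 * L i - L (i + 1) - L (i - 1)) := by
    intro i hi
    obtain ⟨hi1, hiN⟩ := mem_Icc.mp hi
    have hclip : (if i + 1 > N then ℓ N else ℓ (i + 1)) = L (i + 1) := by
      split_ifs with h
      · simp only [L, min_eq_right (show N ≤ i + 1 by omega)]
      · simp only [L, min_eq_left (show i + 1 ≤ N by omega)]
    have hpos : (0 : ℝ) < i := by exact_mod_cast hi1
    rw [hclip, Nat.cast_min, ← mul_min_one_div hpos]
    simp only [L, min_eq_left hiN, min_eq_left (show i - 1 ≤ N by omega)]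
    ring
  rw [sum_congr rfl hterm, sum_Icc_min_mul_secondDiff, min_eq_right hdN]
  simp only [L, min_eq_left hdN, Nat.zero_min, min_self, min_eq_right (Nat.le_succ N)]
  ring

theorem lin_comb_sum_general (N n : ℕ) (ℓ : ℕ → ℝ)
    (hzero : ℓ 0 = 0)
    (e : ℕ → ℕ)
    (hgaps : ∀ k, k < n - 1 → 1 ≤ e (k + 1) - e k ∧ e (k + 1) - e k < N) :
    ∑ i ∈ Finset.Icc 1 N,
      ((i : ℝ) * (2 * ℓ i - (if i + 1 > N then ℓ N else ℓ (i + 1)) - ℓ (i - 1))) *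
        (∑ k ∈ Finset.range (n - 1), min 1 (((e (k + 1) - e k : ℕ) : ℝ) / (i : ℝ)))
    = ∑ k ∈ Finset.range (n - 1), ℓ (e (k + 1) - e k) := by
  simp_rw [mul_sum]
  rw [sum_comm]
  refine sum_congr rfl fun k hk => ?_
  rw [sum_coeff_mul_min_one_div N ℓ (hgaps k (mem_range.mp hk)).2.le, hzero, sub_zero]

/-- For a nonnegative nondecreasing concave `ℓ` with `ℓ 0 = 0`, and the coefficients
`α_i = i·(2ℓ(i) − ℓ(i+1) − ℓ(i−1))` (with `ℓ(N+1) = ℓ(N)`), `β_i = i` of its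
representation via the functions `ℓ_B(d) = min(1,d/B)`, the LoR cost of any
nondecreasing execution sequence with all gaps in `[1, N)` satisfies
`∑ i, α_i · JR_{ℓ_{β_i}}(E) = JR_ℓ(E)`. -/
theorem lin_comb_sum (N n : ℕ) (ℓ : ℕ → ℝ) (hnonneg : ∀ i, 0 ≤ ℓ i) (hmono : Monotone ℓ)
    (hzero : ℓ 0 = 0)
    (hconcave : ∀ i, 1 ≤ i → ℓ (i + 1) + ℓ (i - 1) ≤ 2 * ℓ i)
    (e : ℕ → ℕ) (he : Monotone e)
    (hgaps : ∀ k, k < n - 1 → 1 ≤ e (k + 1) - e k ∧ e (k + 1) - e k < N) :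
    ∑ i ∈ Finset.Icc 1 N,
      ((i : ℝ) * (2 * ℓ i - (if i + 1 > N then ℓ N else ℓ (i + 1)) - ℓ (i - 1))) *
        (∑ k ∈ Finset.range (n - 1), min 1 (((e (k + 1) - e k : ℕ) : ℝ) / (i : ℝ)))
    = ∑ k ∈ Finset.range (n - 1), ℓ (e (k + 1) - e k) :=
  lin_comb_sum_general N n ℓ hzero e hgaps
end

section
/- Suppose for two nondecreasing execution sequences E and E' and for every B ≥ 1 we have JR_{ℓ_B}(E) ≤ c · JR_{ℓ_B}(E'), where ℓ_B(d) = min(1,d/B) and c > 0. Then for every nonnegative nondecreasing concave ℓ : ℕ → ℝ with ℓ(0) = 0 and all gaps of E and E' bounded by N, JR_ℓ(E) ≤ c · JR_ℓ(E'). -/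
/-!
On gaps `d ≤ M`, summation by parts writes `ℓ d - ℓ 0` as
`∑_{B < M} (Δℓ B - Δℓ (B+1)) · min d (B+1) + Δℓ M · min d (M+1)` with `Δℓ B = ℓ (B+1) - ℓ B`.
Concavity and monotonicity make every coefficient nonnegative, and
`min d B = B · ℓ_B d`, so the dominance of `JR_ℓ` is a nonnegative combination of the assumed
dominances of the `JR_{ℓ_B}`.
-/

open Finset

/-- `JR_f(E)` for the execution sequence `E = (e 0, …, e (n - 1))`. -/
def gapSum (f : ℕ → ℝ) (e : ℕ → ℕ) (n : ℕ) : ℝ :=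
  ∑ k ∈ range (n - 1), f (e (k + 1) - e k)

/-- The paper's `ℓ_B`. -/
noncomputable def blockLoss (B d : ℕ) : ℝ :=
  min 1 ((d : ℝ) / B)

theorem natCast_mul_blockLoss (B d : ℕ) : (B : ℝ) * blockLoss B d = ((min d B : ℕ) : ℝ) := by
  rcases Nat.eq_zero_or_pos B with rfl | hB
  · simp
  · rw [blockLoss, mul_min_of_nonneg _ _ B.cast_nonneg, mul_one,
      mul_div_cancel₀ _ (by positivity), Nat.cast_min, min_comm]

theorem gapSum_min_le_of_gapSum_blockLoss_le {e e' : ℕ → ℕ} {n n' B : ℕ} {c : ℝ}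
    (h : gapSum (blockLoss B) e n ≤ c * gapSum (blockLoss B) e' n') :
    gapSum (fun d => ((min d B : ℕ) : ℝ)) e n
      ≤ c * gapSum (fun d => ((min d B : ℕ) : ℝ)) e' n' := by
  simp only [gapSum, ← natCast_mul_blockLoss, ← mul_sum]
  rw [mul_left_comm]
  exact mul_le_mul_of_nonneg_left h B.cast_nonneg

theorem eq_add_sum_mul_min (f : ℕ → ℝ) {M d : ℕ} (hd : d ≤ M) :
    f d = f 0 + ∑ B ∈ range M,
        (f (B + 1) - f B - (f (B + 2) - f (B + 1))) * ((min d (B + 1) : ℕ) : ℝ)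
      + (f (M + 1) - f M) * ((min d (M + 1) : ℕ) : ℝ) := by
  induction M generalizing d with
  | zero =>
    obtain rfl := Nat.le_zero.mp hd
    simp
  | succ M ih =>
    rw [sum_range_succ, show M + 1 + 1 = M + 2 from rfl]
    rcases hd.lt_or_eq with hd | rfl
    · rw [ih (Nat.lt_succ_iff.mp hd), min_eq_left hd.le, min_eq_left (by omega)]
      ring
    · have hmin : ∀ B ∈ range M, min (M + 1) (B + 1) = min M (B + 1) := fun B hB => by
        rw [mem_range] at hB
        omega
      rw [sum_congr rfl fun B hB => by rw [hmin B hB], min_self, min_eq_left (by omega)]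
      have := ih le_rfl
      rw [min_eq_left M.le_succ] at this
      rw [Nat.cast_succ]
      linarith

theorem gapSum_eq_sum_mul_gapSum_min {f : ℕ → ℝ} (h0 : f 0 = 0) {e : ℕ → ℕ} {n M : ℕ}
    (hgap : ∀ k < n - 1, e (k + 1) - e k ≤ M) :
    gapSum f e n = ∑ B ∈ range M, (f (B + 1) - f B - (f (B + 2) - f (B + 1)))
          * gapSum (fun d => ((min d (B + 1) : ℕ) : ℝ)) e n
      + (f (M + 1) - f M) * gapSum (fun d => ((min d (M + 1) : ℕ) : ℝ)) e n := by
  simp only [gapSum, mul_sum]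
  rw [sum_comm, ← sum_add_distrib]
  refine sum_congr rfl fun k hk => ?_
  rw [eq_add_sum_mul_min f (hgap k (mem_range.mp hk)), h0, zero_add]

theorem gapSum_le_mul_of_concave {f : ℕ → ℝ} {e e' : ℕ → ℕ} {n n' M : ℕ} {c : ℝ}
    (hdom : ∀ B, 1 ≤ B → gapSum (blockLoss B) e n ≤ c * gapSum (blockLoss B) e' n')
    (hmono : Monotone f) (h0 : f 0 = 0)
    (hconc : ∀ i, 1 ≤ i → f (i + 1) + f (i - 1) ≤ 2 * f i)
    (hgap : ∀ k < n - 1, e (k + 1) - e k ≤ M) (hgap' : ∀ k < n' - 1, e' (k + 1) - e' k ≤ M) :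
    gapSum f e n ≤ c * gapSum f e' n' := by
  have hmin (B : ℕ) : gapSum (fun d => ((min d (B + 1) : ℕ) : ℝ)) e n
      ≤ c * gapSum (fun d => ((min d (B + 1) : ℕ) : ℝ)) e' n' :=
    gapSum_min_le_of_gapSum_blockLoss_le (hdom (B + 1) B.succ_pos)
  rw [gapSum_eq_sum_mul_gapSum_min h0 hgap, gapSum_eq_sum_mul_gapSum_min h0 hgap', mul_add,
    mul_sum]
  refine add_le_add (sum_le_sum fun B _ => ?_) ?_
  · have hw : 0 ≤ f (B + 1) - f B - (f (B + 2) - f (B + 1)) := by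
      have := hconc (B + 1) B.succ_pos
      rw [Nat.add_sub_cancel] at this
      linarith
    rw [mul_left_comm]
    exact mul_le_mul_of_nonneg_left (hmin B) hw
  · rw [mul_left_comm]
    exact mul_le_mul_of_nonneg_left (hmin M) (sub_nonneg.mpr (hmono M.le_succ))

theorem dominance_transfer_general (N n n' : ℕ) (c : ℝ)
    (e e' : ℕ → ℕ)
    (hgaps : ∀ k, k < n - 1 → 1 ≤ e (k + 1) - e k ∧ e (k + 1) - e k < N)
    (hgaps' : ∀ k, k < n' - 1 → 1 ≤ e' (k + 1) - e' k ∧ e' (k + 1) - e' k < N)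
    (hdom : ∀ B : ℕ, 1 ≤ B →
      (∑ k ∈ Finset.range (n - 1), min 1 (((e (k + 1) - e k : ℕ) : ℝ) / B))
        ≤ c * ∑ k ∈ Finset.range (n' - 1), min 1 (((e' (k + 1) - e' k : ℕ) : ℝ) / B)) :
    ∀ ℓ : ℕ → ℝ, (∀ i, 0 ≤ ℓ i) → Monotone ℓ → ℓ 0 = 0 →
      (∀ i, 1 ≤ i → ℓ (i + 1) + ℓ (i - 1) ≤ 2 * ℓ i) →
      (∑ k ∈ Finset.range (n - 1), ℓ (e (k + 1) - e k))
        ≤ c * ∑ k ∈ Finset.range (n' - 1), ℓ (e' (k + 1) - e' k) := by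
  intro ℓ _ hmono h0 hconc
  exact gapSum_le_mul_of_concave hdom hmono h0 hconc (M := N)
    (fun k hk => (hgaps k hk).2.le) (fun k hk => (hgaps' k hk).2.le)

/-- If for every block size `B ≥ 1` the LoR cost of `E` under `ℓ_B` is at most
`c` times that of `E'`, then for every nonnegative nondecreasing concave locality
function `ℓ` with `ℓ 0 = 0` (and all gaps of `E`, `E'` in `[1, N)`),
`JR_ℓ(E) ≤ c · JR_ℓ(E')`. -/
theorem dominance_transfer (N n n' : ℕ) (c : ℝ) (hc : 0 < c)
    (e e' : ℕ → ℕ) (he : Monotone e) (he' : Monotone e')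
    (hgaps : ∀ k, k < n - 1 → 1 ≤ e (k + 1) - e k ∧ e (k + 1) - e k < N)
    (hgaps' : ∀ k, k < n' - 1 → 1 ≤ e' (k + 1) - e' k ∧ e' (k + 1) - e' k < N)
    (hdom : ∀ B : ℕ, 1 ≤ B →
      (∑ k ∈ Finset.range (n - 1), min 1 (((e (k + 1) - e k : ℕ) : ℝ) / B))
        ≤ c * ∑ k ∈ Finset.range (n' - 1), min 1 (((e' (k + 1) - e' k : ℕ) : ℝ) / B)) :
    ∀ ℓ : ℕ → ℝ, (∀ i, 0 ≤ ℓ i) → Monotone ℓ → ℓ 0 = 0 →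
      (∀ i, 1 ≤ i → ℓ (i + 1) + ℓ (i - 1) ≤ 2 * ℓ i) →
      (∑ k ∈ Finset.range (n - 1), ℓ (e (k + 1) - e k))
        ≤ c * ∑ k ∈ Finset.range (n' - 1), ℓ (e' (k + 1) - e' k) :=
  dominance_transfer_general N n n' c e e' hgaps hgaps' hdom
end

section
/- Let e be a memory location, and let L ≤ e ≤ R be the nearest cached locations on each side, with d_L = e − L < B and d_R = R − e < B. Under a uniformly random shift s ∈ [0, B), the probability that e lies in a different block of size B from both L and R equals max((d_L + d_R)/B − 1, 0). -/
/-!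
Let `x = (e + s) % B` be the offset of `e` inside its block. For `d < B`, a block boundary
lies between `e - d` and `e` iff `x < d`, and between `e` and `e + d` iff `B - d ≤ x`; so `e` is
cut off from both neighbours iff `x ∈ [B - d_R, d_L)`. As `s` runs over `[0, B)` so does `x`,
hence the count is `#[B - d_R, d_L) = max (d_L + d_R - B) 0`.
-/

open Finset

theorem Nat.div_ne_div_iff_mod_lt_sub {a b B : ℕ} (hab : a ≤ b) (h : b - a < B) :
    b / B ≠ a / B ↔ b % B < b - a := by
  obtain ⟨d, rfl⟩ := Nat.exists_eq_add_of_le hab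
  have hB : 0 < B := by omega
  have hmod := Nat.add_mod_add_ite a d B
  have hlt := Nat.mod_lt a hB
  rw [Nat.add_sub_cancel_left] at h ⊢
  rw [Nat.mod_eq_of_lt h] at hmod
  rw [Nat.add_div hB, Nat.div_eq_of_lt h, Nat.mod_eq_of_lt h]
  split_ifs at hmod ⊢ <;> omega

theorem Nat.div_ne_div_iff_sub_le_mod {b c B : ℕ} (hbc : b ≤ c) (h : c - b < B) :
    b / B ≠ c / B ↔ B - (c - b) ≤ b % B := by
  obtain ⟨d, rfl⟩ := Nat.exists_eq_add_of_le hbc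
  have hB : 0 < B := by omega
  rw [Nat.add_sub_cancel_left] at h ⊢
  rw [Nat.add_div hB, Nat.div_eq_of_lt h, Nat.mod_eq_of_lt h]
  split_ifs <;> omega

theorem Nat.div_ne_div_and_div_ne_div_iff {a b c B : ℕ} (hab : a ≤ b) (hbc : b ≤ c)
    (hba : b - a < B) (hcb : c - b < B) :
    b / B ≠ a / B ∧ b / B ≠ c / B ↔ b % B ∈ Ico (B - (c - b)) (b - a) := by
  rw [Nat.div_ne_div_iff_mod_lt_sub hab hba, Nat.div_ne_div_iff_sub_le_mod hbc hcb, mem_Ico,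
    and_comm]

theorem Finset.sum_range_add_mod {M : Type*} [AddCommMonoid M] (n a : ℕ) (f : ℕ → M) :
    ∑ s ∈ range n, f ((a + s) % n) = ∑ s ∈ range n, f s := by
  rcases n.eq_zero_or_pos with rfl | hn
  · simp
  have := NeZero.of_pos hn
  rw [← Fin.sum_univ_eq_sum_range, ← Fin.sum_univ_eq_sum_range]
  calc ∑ i : Fin n, f ((a + i) % n) = ∑ i : Fin n, f (Fin.ofNat n a + i : Fin n) := by
        simp [Fin.val_add]
    _ = ∑ i : Fin n, f i := Equiv.sum_comp (Equiv.addLeft (Fin.ofNat n a)) (fun i => f i)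

theorem natCast_sub_sub_div_eq_max {B a b : ℕ} (hB : 0 < B) (hb : b ≤ B) :
    ((a - (B - b) : ℕ) : ℝ) / B = max (((a : ℝ) + b) / B - 1) 0 := by
  have hB' : (0 : ℝ) < B := by exact_mod_cast hB
  rcases le_total (a + b) B with h | h
  · rw [Nat.sub_eq_zero_of_le (by omega), max_eq_right]
    · simp
    · rw [sub_nonpos, div_le_one hB']; exact_mod_cast h
  · rw [max_eq_left, Nat.cast_sub (by omega), Nat.cast_sub hb]
    · field_simp; ring
    · rw [sub_nonneg, one_le_div hB']; exact_mod_cast h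

theorem random_shift_miss_probability_general (B L e R : ℕ)
    (hLe : L ≤ e) (heR : e ≤ R) (hdL : e - L < B) (hdR : R - e < B) :
    (1 / (B : ℝ)) * ∑ s ∈ Finset.range B,
        (if (e + s) / B ≠ (L + s) / B ∧ (e + s) / B ≠ (R + s) / B then (1 : ℝ) else 0)
      = max ((((e - L : ℕ) : ℝ) + ((R - e : ℕ) : ℝ)) / B - 1) 0 := by
  have hB : 0 < B := by omega
  have hmiss (s : ℕ) : (e + s) / B ≠ (L + s) / B ∧ (e + s) / B ≠ (R + s) / B ↔
      (e + s) % B ∈ Ico (B - (R - e)) (e - L) := by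
    simpa only [Nat.add_sub_add_right] using
      Nat.div_ne_div_and_div_ne_div_iff (a := L + s) (b := e + s) (c := R + s) (B := B)
        (by omega) (by omega) (by omega) (by omega)
  have hIco : Ico (B - (R - e)) (e - L) ⊆ range B := fun t ht => by
    simp only [mem_Ico, mem_range] at ht ⊢; omega
  simp_rw [hmiss]
  rw [sum_range_add_mod B e (fun t => if t ∈ Ico (B - (R - e)) (e - L) then (1 : ℝ) else 0),
    sum_boole, filter_mem_eq_inter, inter_eq_right.mpr hIco, Nat.card_Ico, one_div_mul_eq_div,
    natCast_sub_sub_div_eq_max hB hdR.le]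

/-- Under a uniformly random shift `s ∈ [0,B)`, the probability that location `e`
lies in a different block of size `B` from both its nearest cached neighbours `L`
(to the left, distance `< B`) and `R` (to the right, distance `< B`) equals
`max((d_L + d_R)/B − 1, 0)`. -/
theorem random_shift_miss_probability (B L e R : ℕ) (hB : 1 ≤ B)
    (hLe : L ≤ e) (heR : e ≤ R) (hdL : e - L < B) (hdR : R - e < B) :
    (1 / (B : ℝ)) * ∑ s ∈ Finset.range B,
        (if (e + s) / B ≠ (L + s) / B ∧ (e + s) / B ≠ (R + s) / B then (1 : ℝ) else 0)
      = max ((((e - L : ℕ) : ℝ) + ((R - e : ℕ) : ℝ)) / B - 1) 0 :=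
  random_shift_miss_probability_general B L e R hLe heR hdL hdR
end
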